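/- Let C₊ ⊂ ℝ^d be a closed cone of dimension d_u with C₊ ∩ (ℝ^{d_s}×{0}) = {0}, and let Γ ⊂ ℝ^d be a d_s-dimensional embedded C¹ submanifold such that the straight line through any two distinct points of Γ is normal to some d_u-dimensional linear subspace contained in C₊. Let π : ℝ^d → ℝ^{d_s} be the orthogonal projection onto the first d_s coordinates. Then the restriction π_Γ : Γ → ℝ^{d_s} is injective, is a C¹ diffeomorphism onto its (open) image, and Γ is the graph of the C¹ map γ = π₊ ∘ π_Γ^{−1} : π(Γ) → ℝ^{d_u}, where π₊ is the projection onto the last d_u coordinates. -/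

import Mathlib

/-!
The cone condition and compactness of `C₊ ∩ S^{d-1}` make the unstable projection `π₊`
`δ`-expanding on `C₊`. If a chord `c = x - y` of `Γ` is orthogonal to `L ⊆ C₊` with
`dim L = d_u`, then `π₊` maps `L` onto `ℝ^{d_u}`, so some `z ∈ L` has `π₊ z = π₊ c`, and
orthogonality gives `‖π₊ c‖² = -⟪π c, π z⟫ ≤ ‖π c‖ ‖z‖ ≤ δ⁻¹ ‖π c‖ ‖π₊ c‖`. Hence
`‖c‖ ≤ (1 + δ⁻¹) ‖π c‖`: `π` is antilipschitz on `Γ`. The same bound passes to the tangent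
cone of `Γ`, so `π ∘ f` has invertible derivative for every chart `f`, and the inverse function
theorem shows that `π(Γ)` is open and that `π_Γ⁻¹` is `C¹`.
-/

open Function Set Filter Topology
open scoped RealInnerProductSpace NNReal

noncomputable def fstProj (m n : ℕ) : EuclideanSpace ℝ (Fin (m + n)) →L[ℝ] EuclideanSpace ℝ (Fin m) :=
  LinearMap.toContinuousLinearMap
    { toFun := fun x => WithLp.toLp 2 fun i => x (Fin.castAdd n i)
      map_add' := fun _ _ => rfl
      map_smul' := fun _ _ => rfl }

noncomputable def sndProj (m n : ℕ) : EuclideanSpace ℝ (Fin (m + n)) →L[ℝ] EuclideanSpace ℝ (Fin n) :=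
  LinearMap.toContinuousLinearMap
    { toFun := fun x => WithLp.toLp 2 fun j => x (Fin.natAdd m j)
      map_add' := fun _ _ => rfl
      map_smul' := fun _ _ => rfl }

@[simp]
lemma fstProj_apply {m n : ℕ} (x : EuclideanSpace ℝ (Fin (m + n))) (i : Fin m) :
    fstProj m n x i = x (Fin.castAdd n i) := rfl

@[simp]
lemma sndProj_apply {m n : ℕ} (x : EuclideanSpace ℝ (Fin (m + n))) (j : Fin n) :
    sndProj m n x j = x (Fin.natAdd m j) := rfl

lemma inner_eq_inner_fstProj_add_inner_sndProj {m n : ℕ} (x y : EuclideanSpace ℝ (Fin (m + n))) :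
    ⟪x, y⟫ = ⟪fstProj m n x, fstProj m n y⟫ + ⟪sndProj m n x, sndProj m n y⟫ := by
  simp only [PiLp.inner_apply, fstProj_apply, sndProj_apply]
  exact Fin.sum_univ_add fun i => ⟪x i, y i⟫

section OrthogonalSplitting

variable {E F G : Type*} [NormedAddCommGroup E] [InnerProductSpace ℝ E]
  [NormedAddCommGroup F] [InnerProductSpace ℝ F] [NormedAddCommGroup G] [InnerProductSpace ℝ G]
  {p : E →L[ℝ] F} {q : E →L[ℝ] G}

lemma norm_sq_eq_of_inner_eq (hpq : ∀ x y, ⟪x, y⟫ = ⟪p x, p y⟫ + ⟪q x, q y⟫) (x : E) :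
    ‖x‖ ^ 2 = ‖p x‖ ^ 2 + ‖q x‖ ^ 2 := by
  simp only [← real_inner_self_eq_norm_sq, hpq x x]

lemma norm_le_of_inner_eq (hpq : ∀ x y, ⟪x, y⟫ = ⟪p x, p y⟫ + ⟪q x, q y⟫) (x : E) :
    ‖p x‖ ≤ ‖x‖ :=
  pow_le_pow_iff_left₀ (norm_nonneg _) (norm_nonneg _) two_ne_zero |>.1 <| by
    rw [norm_sq_eq_of_inner_eq hpq x]; nlinarith [sq_nonneg ‖q x‖]

lemma norm_le_add_of_inner_eq (hpq : ∀ x y, ⟪x, y⟫ = ⟪p x, p y⟫ + ⟪q x, q y⟫) (x : E) :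
    ‖x‖ ≤ ‖p x‖ + ‖q x‖ :=
  pow_le_pow_iff_left₀ (norm_nonneg _) (by positivity) two_ne_zero |>.1 <| by
    rw [norm_sq_eq_of_inner_eq hpq x]; nlinarith [norm_nonneg (p x), norm_nonneg (q x)]

lemma eq_of_inner_eq (hpq : ∀ x y, ⟪x, y⟫ = ⟪p x, p y⟫ + ⟪q x, q y⟫) {x y : E}
    (hp : p x = p y) (hq : q x = q y) : x = y := by
  have h := norm_le_add_of_inner_eq hpq (x - y)
  rw [map_sub, map_sub, hp, hq, sub_self, sub_self, norm_zero, norm_zero, add_zero] at h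
  exact sub_eq_zero.1 (norm_le_zero_iff.1 h)

lemma mul_norm_le_norm_of_inner_eq_zero (hpq : ∀ x y, ⟪x, y⟫ = ⟪p x, p y⟫ + ⟪q x, q y⟫)
    {δ : ℝ} (hδ : 0 < δ) {c z : E} (hcz : ⟪c, z⟫ = 0) (hqz : q z = q c)
    (hz : δ * ‖z‖ ≤ ‖q z‖) : δ * ‖q c‖ ≤ ‖p c‖ := by
  have hsq : ‖q c‖ ^ 2 ≤ ‖p c‖ * ‖z‖ :=
    calc ‖q c‖ ^ 2 = -⟪p c, p z⟫ := by
          rw [← real_inner_self_eq_norm_sq]; rw [hpq, hqz] at hcz; linarith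
      _ ≤ ‖p c‖ * ‖p z‖ := (neg_le_abs _).trans (abs_real_inner_le_norm _ _)
      _ ≤ ‖p c‖ * ‖z‖ := by gcongr; exact norm_le_of_inner_eq hpq z
  rcases (norm_nonneg (q c)).eq_or_lt with h0 | hpos
  · rw [← h0, mul_zero]; exact norm_nonneg _
  · rw [hqz] at hz
    nlinarith [norm_nonneg (p c)]

lemma norm_le_mul_norm_of_forall_inner_eq_zero
    (hpq : ∀ x y, ⟪x, y⟫ = ⟪p x, p y⟫ + ⟪q x, q y⟫) [FiniteDimensional ℝ G]
    {L : Submodule ℝ E} [FiniteDimensional ℝ L] (hL : Module.finrank ℝ L = Module.finrank ℝ G)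
    {δ : ℝ} (hδ : 0 < δ) (hLδ : ∀ z ∈ L, δ * ‖z‖ ≤ ‖q z‖) {c : E} (hc : ∀ z ∈ L, ⟪c, z⟫ = 0) :
    ‖c‖ ≤ (1 + δ⁻¹) * ‖p c‖ := by
  have hqL : Injective (q.toLinearMap.comp L.subtype) := by
    refine (injective_iff_map_eq_zero _).2 fun z hz => Subtype.ext <| norm_le_zero_iff.1 ?_
    have := hLδ z z.2
    rw [show q z = 0 from hz, norm_zero] at this
    nlinarith [norm_nonneg (z : E)]
  obtain ⟨z, hz⟩ := (LinearMap.injective_iff_surjective_of_finrank_eq_finrank hL).1 hqL (q c)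
  have hflat := mul_norm_le_norm_of_inner_eq_zero hpq hδ (hc z z.2) hz (hLδ z z.2)
  calc ‖c‖ ≤ ‖p c‖ + ‖q c‖ := norm_le_add_of_inner_eq hpq c
    _ ≤ ‖p c‖ + δ⁻¹ * ‖p c‖ := by
        gcongr; rwa [le_inv_mul_iff₀ hδ]
    _ = (1 + δ⁻¹) * ‖p c‖ := by ring

end OrthogonalSplitting

lemma exists_pos_mul_norm_le_of_isClosed_cone {E F : Type*} [NormedAddCommGroup E]
    [NormedSpace ℝ E] [ProperSpace E] [NormedAddCommGroup F] [NormedSpace ℝ F]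
    {K : Set E} (hK : IsClosed K) (hcone : ∀ c : ℝ, 0 < c → ∀ x ∈ K, c • x ∈ K)
    (q : E →L[ℝ] F) (hq : ∀ x ∈ K, q x = 0 → x = 0) :
    ∃ δ > 0, ∀ x ∈ K, δ * ‖x‖ ≤ ‖q x‖ := by
  obtain ⟨δ, hδ, hδK⟩ := ((isCompact_sphere (0 : E) 1).inter_left hK).exists_forall_le'
    q.continuous.norm.continuousOn (a := 0) fun x ⟨hxK, hx1⟩ =>
      norm_pos_iff.2 fun h0 => by simp [hq x hxK h0] at hx1
  refine ⟨δ, hδ, fun x hxK => ?_⟩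
  rcases eq_or_ne x 0 with rfl | hx
  · simp
  have hx' : 0 < ‖x‖ := norm_pos_iff.2 hx
  have := hδK (‖x‖⁻¹ • x) ⟨hcone _ (inv_pos.2 hx') x hxK, by simp [norm_smul, hx'.ne']⟩
  rwa [map_smul, norm_smul, norm_inv, norm_norm, inv_mul_eq_div, le_div_iff₀ hx'] at this

section Antilipschitz

variable {E F : Type*} [NormedAddCommGroup E] [NormedSpace ℝ E]
  [NormedAddCommGroup F] [NormedSpace ℝ F] {p : E →L[ℝ] F} {Γ : Set E} {K : ℝ≥0}

lemma antilipschitzWith_domRestrict_iff :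
    AntilipschitzWith K (Γ.domRestrict p) ↔ ∀ x ∈ Γ, ∀ y ∈ Γ, ‖x - y‖ ≤ K * ‖p (x - y)‖ := by
  simp only [antilipschitzWith_iff_le_mul_dist, Subtype.forall, Subtype.dist_eq, domRestrict_apply,
    dist_eq_norm, map_sub]

lemma norm_le_mul_norm_of_mem_tangentConeAt (hΓ : AntilipschitzWith K (Γ.domRestrict p))
    {x u : E} (hx : x ∈ Γ) (hu : u ∈ tangentConeAt ℝ Γ x) : ‖u‖ ≤ K * ‖p u‖ := by
  obtain ⟨α, l, hl, c, d, -, hdΓ, hcd⟩ := exists_fun_of_mem_tangentConeAt hu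
  have hpcd := ((p.continuous.tendsto u).comp hcd).norm.const_mul (K : ℝ)
  refine le_of_tendsto_of_tendsto hcd.norm hpcd (hdΓ.mono fun n hn => ?_)
  have := antilipschitzWith_domRestrict_iff.1 hΓ _ hn x hx
  rw [add_sub_cancel_left] at this
  simp only [comp_apply, map_smul, norm_smul]
  nlinarith [norm_nonneg (c n)]

end Antilipschitz

namespace AntilipschitzWith

variable {E F : Type*} [NormedAddCommGroup E] [NormedSpace ℝ E]
  [NormedAddCommGroup F] [NormedSpace ℝ F] [FiniteDimensional ℝ F]
  {p : E →L[ℝ] F} {Γ : Set E} {K : ℝ≥0} {f : F → E} {w : F}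

/-- The derivative of `f` takes values in the tangent cone of `Γ`, on which `p` is injective. -/
lemma exists_hasFDerivAt_comp_equiv (hΓ : AntilipschitzWith K (Γ.domRestrict p))
    {f' : F →L[ℝ] E} (hf : HasFDerivAt f f' w) (hfΓ : ∀ᶠ w' in 𝓝 w, f w' ∈ Γ)
    (hf' : Injective f') : ∃ T : F ≃L[ℝ] F, HasFDerivAt (p ∘ f) (T : F →L[ℝ] F) w := by
  have htan (v : F) : ‖f' v‖ ≤ K * ‖p (f' v)‖ := by
    refine norm_le_mul_norm_of_mem_tangentConeAt hΓ hfΓ.self_of_nhds ?_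
    refine tangentConeAt_mono (image_subset_iff.2 fun _ h => h) <|
      (hf.hasFDerivWithinAt (s := {w' | f w' ∈ Γ})).mapsTo_tangent_cone ?_
    rw [tangentConeAt_of_mem_nhds hfΓ]
    trivial
  have hinj : Injective (p.comp f') := by
    refine (injective_iff_map_eq_zero _).2 fun v hv => hf' ?_
    have := htan v
    rw [← ContinuousLinearMap.comp_apply, hv, norm_zero, mul_zero] at this
    rw [norm_le_zero_iff.1 this, map_zero]
  exact ⟨(LinearEquiv.ofInjectiveEndo (p.comp f' : F →ₗ[ℝ] F) hinj).toContinuousLinearEquiv,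
    p.hasFDerivAt.comp w hf⟩

lemma image_mem_nhds_of_contDiffAt (hΓ : AntilipschitzWith K (Γ.domRestrict p))
    (hf : ContDiffAt ℝ 1 f w) (hfΓ : ∀ᶠ w' in 𝓝 w, f w' ∈ Γ) (hf' : Injective (fderiv ℝ f w)) :
    p '' Γ ∈ 𝓝 (p (f w)) := by
  obtain ⟨T, hT⟩ := hΓ.exists_hasFDerivAt_comp_equiv (hf.differentiableAt one_ne_zero).hasFDerivAt
    hfΓ hf'
  have hpf : ContDiffAt ℝ 1 (p ∘ f) w := p.contDiff.contDiffAt.comp w hf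
  rw [← comp_apply (f := p), ← (hpf.hasStrictFDerivAt' hT one_ne_zero).map_nhds_eq_of_equiv]
  exact mem_map.2 (mem_of_superset hfΓ fun w' hw' => mem_image_of_mem p hw')

lemma contDiffAt_invFunOn (hΓ : AntilipschitzWith K (Γ.domRestrict p))
    (hf : ContDiffAt ℝ 1 f w) (hfΓ : ∀ᶠ w' in 𝓝 w, f w' ∈ Γ) (hf' : Injective (fderiv ℝ f w)) :
    ContDiffAt ℝ 1 (invFunOn p Γ) (p (f w)) := by
  obtain ⟨T, hT⟩ := hΓ.exists_hasFDerivAt_comp_equiv (hf.differentiableAt one_ne_zero).hasFDerivAt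
    hfΓ hf'
  have hpf : ContDiffAt ℝ 1 (p ∘ f) w := p.contDiff.contDiffAt.comp w hf
  set g := hpf.localInverse hT one_ne_zero
  have hgw : g (p (f w)) = w := hpf.localInverse_apply_image hT one_ne_zero
  have hg : ContDiffAt ℝ 1 g (p (f w)) := hpf.to_localInverse hT one_ne_zero
  have hfg : ContDiffAt ℝ 1 (f ∘ g) (p (f w)) := (hgw ▸ hf).comp _ hg
  refine hfg.congr_of_eventuallyEq ?_
  have hgΓ : ∀ᶠ s in 𝓝 (p (f w)), f (g s) ∈ Γ := hg.continuousAt.eventually (hgw ▸ hfΓ)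
  filter_upwards [hgΓ, (hpf.hasStrictFDerivAt' hT one_ne_zero).eventually_right_inverse]
    with s hs hps
  have hinv := (injOn_iff_injective.2 hΓ.injective).leftInvOn_invFunOn hs
  rwa [show p (f (g s)) = s from hps] at hinv

end AntilipschitzWith

lemma eq_setOf_eq_comp_invFunOn {α β γ : Type*} [Nonempty α] {p : α → β} {q : α → γ}
    {Γ : Set α} (hΓ : InjOn p Γ) (hpq : ∀ x y, p x = p y → q x = q y → x = y) :
    Γ = {x | p x ∈ p '' Γ ∧ q x = (q ∘ invFunOn p Γ) (p x)} := by
  ext x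
  refine ⟨fun hx => ⟨mem_image_of_mem p hx, by rw [comp_apply, hΓ.leftInvOn_invFunOn hx]⟩, ?_⟩
  rintro ⟨hpx, hqx⟩
  rw [hpq x _ (invFunOn_eq hpx).symm hqx]
  exact invFunOn_mem hpx

theorem stmt_14_general (ds du : ℕ)
    (Cplus : Set (EuclideanSpace ℝ (Fin (ds + du))))
    (hclosed : IsClosed Cplus)
    (hcone : ∀ (c : ℝ) (x : EuclideanSpace ℝ (Fin (ds + du))), x ∈ Cplus → c • x ∈ Cplus)
    (hint : Cplus ∩ {x | ∀ j : Fin du, x (Fin.natAdd ds j) = 0} = {0})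
    -- the coordinate projections
    (π : EuclideanSpace ℝ (Fin (ds + du)) → EuclideanSpace ℝ (Fin ds))
    (hπ : ∀ x i, π x i = x (Fin.castAdd du i))
    (πp : EuclideanSpace ℝ (Fin (ds + du)) → EuclideanSpace ℝ (Fin du))
    (hπp : ∀ x j, πp x j = x (Fin.natAdd ds j))
    (Γ : Set (EuclideanSpace ℝ (Fin (ds + du))))
    -- Γ is a d_s-dimensional embedded C¹ submanifold
    (hΓmani : ∀ p ∈ Γ, ∃ (V : Set (EuclideanSpace ℝ (Fin (ds + du))))
      (W : Set (EuclideanSpace ℝ (Fin ds)))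
      (f : EuclideanSpace ℝ (Fin ds) → EuclideanSpace ℝ (Fin (ds + du))),
      IsOpen V ∧ p ∈ V ∧ IsOpen W ∧ ContDiffOn ℝ 1 f W ∧ Set.InjOn f W ∧
      f '' W = Γ ∩ V ∧ ∀ w ∈ W, Function.Injective (fderivWithin ℝ f W w))
    -- chord transversality: lines through two points of Γ are normal to a
    -- d_u-dimensional subspace contained in C₊
    (hchord : ∀ x ∈ Γ, ∀ y ∈ Γ, x ≠ y →
      ∃ L : Submodule ℝ (EuclideanSpace ℝ (Fin (ds + du))),
        Module.finrank ℝ L = du ∧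
        (L : Set (EuclideanSpace ℝ (Fin (ds + du)))) ⊆ Cplus ∧
        ∀ v ∈ L, ⟪x - y, v⟫ = 0) :
    Set.InjOn π Γ ∧ IsOpen (π '' Γ) ∧
    ∃ γ : EuclideanSpace ℝ (Fin ds) → EuclideanSpace ℝ (Fin du),
      ContDiffOn ℝ 1 γ (π '' Γ) ∧
      Γ = {x | π x ∈ π '' Γ ∧ πp x = γ (π x)} := by
  obtain rfl : π = fstProj ds du := funext fun x => PiLp.ext (hπ x)
  obtain rfl : πp = sndProj ds du := funext fun x => PiLp.ext (hπp x)
  obtain ⟨δ, hδ, hδC⟩ := exists_pos_mul_norm_le_of_isClosed_cone hclosed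
    (fun c _ x hx => hcone c x hx) (sndProj ds du)
    (fun x hx h0 => hint.subset ⟨hx, fun j => congrArg (· j) h0⟩)
  have hanti : AntilipschitzWith ⟨1 + δ⁻¹, by positivity⟩ (Γ.domRestrict (fstProj ds du)) := by
    refine antilipschitzWith_domRestrict_iff.2 fun x hx y hy => ?_
    rcases eq_or_ne x y with rfl | hxy
    · simp
    obtain ⟨L, hL, hLC, hxyL⟩ := hchord x hx y hy hxy
    exact norm_le_mul_norm_of_forall_inner_eq_zero inner_eq_inner_fstProj_add_inner_sndProj
      (by rw [hL, finrank_euclideanSpace_fin]) hδ (fun z hz => hδC z (hLC hz)) hxyL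
  have hlocal : ∀ x ∈ Γ, fstProj ds du '' Γ ∈ 𝓝 (fstProj ds du x) ∧
      ContDiffAt ℝ 1 (invFunOn (fstProj ds du) Γ) (fstProj ds du x) := by
    intro x hx
    obtain ⟨V, W, f, -, hxV, hW, hf, -, hfW, hf'⟩ := hΓmani x hx
    obtain ⟨w, hw, rfl⟩ : x ∈ f '' W := hfW ▸ ⟨hx, hxV⟩
    have hfΓ : ∀ᶠ w' in 𝓝 w, f w' ∈ Γ :=
      mem_of_superset (hW.mem_nhds hw) fun w' hw' => (hfW ▸ mem_image_of_mem f hw').1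
    have hfw := hf.contDiffAt (hW.mem_nhds hw)
    have hDf : Injective (fderiv ℝ f w) := by
      rw [← fderivWithin_of_isOpen hW hw]; exact hf' w hw
    exact ⟨hanti.image_mem_nhds_of_contDiffAt hfw hfΓ hDf, hanti.contDiffAt_invFunOn hfw hfΓ hDf⟩
  have hinj : InjOn (fstProj ds du) Γ := injOn_iff_injective.2 hanti.injective
  refine ⟨hinj, isOpen_iff_mem_nhds.2 ?_, sndProj ds du ∘ invFunOn (fstProj ds du) Γ, ?_,
    eq_setOf_eq_comp_invFunOn hinj fun x y hp hq =>
      eq_of_inner_eq inner_eq_inner_fstProj_add_inner_sndProj hp hq⟩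
  · rintro _ ⟨x, hx, rfl⟩
    exact (hlocal x hx).1
  · rintro _ ⟨x, hx, rfl⟩
    exact ((sndProj ds du).contDiff.contDiffAt.comp _ (hlocal x hx).2).contDiffWithinAt

/-- a fake stable leaf is a graph: if `Γ ⊂ ℝ^{d_s+d_u}` is a `d_s`-dimensional
embedded `C¹` submanifold whose chords are normal to `d_u`-dimensional subspaces contained
in a closed `d_u`-dimensional cone `C₊` with `C₊ ∩ (ℝ^{d_s} × {0}) = {0}`, then the orthogonal
projection `π` to the first `d_s` coordinates is injective on `Γ`, its image is open, and
`Γ` is the graph of a `C¹` map `γ` over `π(Γ)`. -/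
theorem stmt_14 (ds du : ℕ) (hds : 1 ≤ ds) (hdu : 1 ≤ du)
    (Cplus : Set (EuclideanSpace ℝ (Fin (ds + du))))
    (hclosed : IsClosed Cplus)
    (hcone : ∀ (c : ℝ) (x : EuclideanSpace ℝ (Fin (ds + du))), x ∈ Cplus → c • x ∈ Cplus)
    (hdim : ∃ L : Submodule ℝ (EuclideanSpace ℝ (Fin (ds + du))),
      Module.finrank ℝ L = du ∧ (L : Set (EuclideanSpace ℝ (Fin (ds + du)))) ⊆ Cplus)
    (hdim' : ∀ L : Submodule ℝ (EuclideanSpace ℝ (Fin (ds + du))),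
      (L : Set (EuclideanSpace ℝ (Fin (ds + du)))) ⊆ Cplus → Module.finrank ℝ L ≤ du)
    (hint : Cplus ∩ {x | ∀ j : Fin du, x (Fin.natAdd ds j) = 0} = {0})
    -- the coordinate projections
    (π : EuclideanSpace ℝ (Fin (ds + du)) → EuclideanSpace ℝ (Fin ds))
    (hπ : ∀ x i, π x i = x (Fin.castAdd du i))
    (πp : EuclideanSpace ℝ (Fin (ds + du)) → EuclideanSpace ℝ (Fin du))
    (hπp : ∀ x j, πp x j = x (Fin.natAdd ds j))
    (Γ : Set (EuclideanSpace ℝ (Fin (ds + du))))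
    -- Γ is a d_s-dimensional embedded C¹ submanifold
    (hΓmani : ∀ p ∈ Γ, ∃ (V : Set (EuclideanSpace ℝ (Fin (ds + du))))
      (W : Set (EuclideanSpace ℝ (Fin ds)))
      (f : EuclideanSpace ℝ (Fin ds) → EuclideanSpace ℝ (Fin (ds + du))),
      IsOpen V ∧ p ∈ V ∧ IsOpen W ∧ ContDiffOn ℝ 1 f W ∧ Set.InjOn f W ∧
      f '' W = Γ ∩ V ∧ ∀ w ∈ W, Function.Injective (fderivWithin ℝ f W w))
    -- chord transversality: lines through two points of Γ are normal to a
    -- d_u-dimensional subspace contained in C₊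
    (hchord : ∀ x ∈ Γ, ∀ y ∈ Γ, x ≠ y →
      ∃ L : Submodule ℝ (EuclideanSpace ℝ (Fin (ds + du))),
        Module.finrank ℝ L = du ∧
        (L : Set (EuclideanSpace ℝ (Fin (ds + du)))) ⊆ Cplus ∧
        ∀ v ∈ L, ⟪x - y, v⟫ = 0) :
    Set.InjOn π Γ ∧ IsOpen (π '' Γ) ∧
    ∃ γ : EuclideanSpace ℝ (Fin ds) → EuclideanSpace ℝ (Fin du),
      ContDiffOn ℝ 1 γ (π '' Γ) ∧
      Γ = {x | π x ∈ π '' Γ ∧ πp x = γ (π x)} :=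
  stmt_14_general ds du Cplus hclosed hcone hint π hπ πp hπp Γ hΓmani hchord
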